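/- arXiv:1808.02671 — 2 statements merged into one kernel-verified Lean document; each statement's English description precedes it below -/
import Mathlib

section
/- E(η|Z) = 0 P-a.s. if and only if E[η · 1{αᵀZ ≤ t}] = 0 for every α ∈ 𝕊^{p-1} and every t ∈ ℝ. -/
open MeasureTheory
open scoped RealInnerProductSpace

/-!
Split η = η⁺ - η⁻. Since every `σ(Z)`-measurable set is a preimage `Z ⁻¹' A`, the conditional
expectation vanishes iff the finite measures `Z₊(η⁺ P)` and `Z₊(η⁻ P)` on `ℝ^p` coincide. The
hypothesis says that they agree on every half-space `{x | ⟪α, x⟫ ≤ t}` with `‖α‖ = 1`; by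
rescaling, their images under every nonzero projection `⟪α, ·⟫` have the same distribution
function, and the Cramér–Wold theorem (uniqueness of characteristic functions) concludes.
-/

open Set

namespace MeasureTheory

section CramerWold

variable {E : Type*} [NormedAddCommGroup E] [InnerProductSpace ℝ E]

lemma preimage_inner_Iic_eq_unit_halfspace {α : E} (hα : α ≠ 0) (t : ℝ) :
    (⟪α, ·⟫) ⁻¹' Iic t = {x | ⟪(‖α‖⁻¹ : ℝ) • α, x⟫ ≤ ‖α‖⁻¹ * t} := by
  ext x
  simp only [mem_preimage, mem_Iic, real_inner_smul_left]
  exact (mul_le_mul_iff_right₀ (inv_pos.mpr (norm_pos_iff.mpr hα))).symm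

variable [MeasurableSpace E] [BorelSpace E]

lemma charFun_eq_charFun_map_inner (μ : Measure E) (t : E) :
    charFun μ t = charFun (μ.map (⟪t, ·⟫)) 1 := by
  rw [charFun_apply, charFun_apply_real, integral_map (by fun_prop) (by fun_prop)]
  simp [real_inner_comm]

theorem Measure.ext_of_map_inner [CompleteSpace E] [SecondCountableTopology E]
    {μ ν : Measure E} [IsFiniteMeasure μ] [IsFiniteMeasure ν]
    (h : ∀ α : E, μ.map (⟪α, ·⟫) = ν.map (⟪α, ·⟫)) : μ = ν :=
  Measure.ext_of_charFun <| funext fun t => by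
    rw [charFun_eq_charFun_map_inner μ, charFun_eq_charFun_map_inner ν, h]

theorem Measure.ext_of_unit_halfspaces [CompleteSpace E] [SecondCountableTopology E]
    [Nontrivial E] {μ ν : Measure E} [IsFiniteMeasure μ] [IsFiniteMeasure ν]
    (h : ∀ α : E, ‖α‖ = 1 → ∀ t : ℝ, μ {x | ⟪α, x⟫ ≤ t} = ν {x | ⟪α, x⟫ ≤ t}) : μ = ν := by
  have hmap : ∀ α : E, α ≠ 0 → μ.map (⟪α, ·⟫) = ν.map (⟪α, ·⟫) := fun α hα =>
    Measure.ext_of_Iic _ _ fun t => by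
      rw [Measure.map_apply (by fun_prop) measurableSet_Iic,
        Measure.map_apply (by fun_prop) measurableSet_Iic,
        preimage_inner_Iic_eq_unit_halfspace hα]
      exact h _ (norm_smul_inv_norm hα) _
  refine Measure.ext_of_map_inner fun α => ?_
  rcases eq_or_ne α 0 with rfl | hα
  · obtain ⟨β, hβ⟩ := exists_ne (0 : E)
    have hmass : μ univ = ν univ := by
      simpa [Measure.map_apply (by fun_prop : Measurable (⟪β, ·⟫))] using
        congrArg (· univ) (hmap β hβ)
    simp [Measure.map_const, hmass]
  · exact hmap α hα

end CramerWold

section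

variable {Ω E : Type*} [MeasurableSpace Ω] [MeasurableSpace E] {P : Measure Ω} {Z : Ω → E}
  {η : Ω → ℝ}

lemma setIntegral_preimage_eq_toReal_sub (hZ : Measurable Z) (hη : Integrable η P)
    {A : Set E} (hA : MeasurableSet A) :
    ∫ ω in Z ⁻¹' A, η ω ∂P =
      ((P.withDensity fun ω => ENNReal.ofReal (η ω)).map Z A).toReal -
        ((P.withDensity fun ω => ENNReal.ofReal (-η ω)).map Z A).toReal := by
  rw [Measure.map_apply hZ hA, Measure.map_apply hZ hA, withDensity_apply _ (hZ hA),
    withDensity_apply _ (hZ hA)]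
  exact integral_eq_lintegral_pos_part_sub_lintegral_neg_part hη.restrict

theorem setIntegral_preimage_eq_zero_of_unit_halfspaces [NormedAddCommGroup E]
    [InnerProductSpace ℝ E] [BorelSpace E] [CompleteSpace E] [SecondCountableTopology E]
    [Nontrivial E] (hZ : Measurable Z) (hη : Integrable η P)
    (h : ∀ α : E, ‖α‖ = 1 → ∀ t : ℝ, ∫ ω in Z ⁻¹' {x | ⟪α, x⟫ ≤ t}, η ω ∂P = 0)
    {A : Set E} (hA : MeasurableSet A) :
    ∫ ω in Z ⁻¹' A, η ω ∂P = 0 := by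
  have := isFiniteMeasure_withDensity_ofReal hη.2
  have := isFiniteMeasure_withDensity_ofReal hη.neg.2
  suffices (P.withDensity fun ω => ENNReal.ofReal (η ω)).map Z =
      (P.withDensity fun ω => ENNReal.ofReal (-η ω)).map Z by
    rw [setIntegral_preimage_eq_toReal_sub hZ hη hA, this, sub_self]
  refine Measure.ext_of_unit_halfspaces fun α hα t => ?_
  have hhalf := h α hα t
  rw [setIntegral_preimage_eq_toReal_sub hZ hη (measurableSet_le (by fun_prop) (by fun_prop)),
    sub_eq_zero] at hhalf
  exact (ENNReal.toReal_eq_toReal_iff' (measure_ne_top _ _) (measure_ne_top _ _)).mp hhalf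

end

theorem condExp_ae_eq_zero_iff_forall_setIntegral_eq_zero {Ω : Type*} {m m₀ : MeasurableSpace Ω}
    {μ : Measure Ω} (hm : m ≤ m₀) [SigmaFinite (μ.trim hm)] {f : Ω → ℝ} (hf : Integrable f μ) :
    μ[f | m] =ᵐ[μ] 0 ↔ ∀ s, MeasurableSet[m] s → ∫ x in s, f x ∂μ = 0 := by
  refine ⟨fun h s hs => ?_, fun h => ?_⟩
  · rw [← setIntegral_condExp hm hf hs, setIntegral_congr_ae (hm s hs) (h.mono fun _ hx _ => hx)]
    simp
  · refine (ae_eq_condExp_of_forall_setIntegral_eq hm hf (fun _ _ _ => integrableOn_zero)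
      (fun s hs _ => ?_) aestronglyMeasurable_zero).symm
    simp [h s hs]

end MeasureTheory

/-- `E(η|Z) = 0` a.s. iff `E[η · 1{αᵀZ ≤ t}] = 0` for every unit vector `α ∈ 𝕊^{p-1}`
and every `t ∈ ℝ`. -/
theorem stmt5 {Ω : Type*} [MeasurableSpace Ω] (P : Measure Ω) [IsProbabilityMeasure P]
    (p : ℕ) (hp : 1 ≤ p) (Z : Ω → EuclideanSpace ℝ (Fin p)) (hZ : Measurable Z)
    (η : Ω → ℝ) (hη : Integrable η P) :
    P[η | MeasurableSpace.comap Z inferInstance] =ᵐ[P] 0 ↔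
      ∀ α : EuclideanSpace ℝ (Fin p), ‖α‖ = 1 → ∀ t : ℝ,
        ∫ ω, η ω * (if ⟪α, Z ω⟫ ≤ t then (1 : ℝ) else 0) ∂P = 0 := by
  have : Nonempty (Fin p) := ⟨⟨0, hp⟩⟩
  have hhalf (α : EuclideanSpace ℝ (Fin p)) (t : ℝ) :
      ∫ ω, η ω * (if ⟪α, Z ω⟫ ≤ t then (1 : ℝ) else 0) ∂P =
        ∫ ω in Z ⁻¹' {x | ⟪α, x⟫ ≤ t}, η ω ∂P := by
    rw [← integral_indicator (hZ (measurableSet_le (by fun_prop) (by fun_prop)))]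
    congr with ω
    by_cases hω : ⟪α, Z ω⟫ ≤ t <;> simp [hω]
  simp_rw [condExp_ae_eq_zero_iff_forall_setIntegral_eq_zero hZ.comap_le hη, hhalf]
  constructor
  · exact fun h α _ t => h _ ⟨_, measurableSet_le (by fun_prop) (by fun_prop), rfl⟩
  · rintro h _ ⟨A, hA, rfl⟩
    exact setIntegral_preimage_eq_zero_of_unit_halfspaces hZ hη h hA
end

section
/- Let X : Ω → ℝ^q and T : Ω → ℝ be random elements with E‖X‖² < ∞, let ε : Ω → ℝ satisfy E(ε²) < ∞ and E(ε | X, T) = 0 P-a.s. (conditional expectation given the σ-algebra generated by the pair (X, T)), let β ∈ ℝ^q, let g : ℝ → ℝ be Borel measurable with E[g(T)²] < ∞, and set Y := βᵀX + g(T) + ε. Define X̃ := X − E(X|T) (conditional expectation taken componentwise given the σ-algebra generated by T) and Ỹ := Y − E(Y|T). Then E[X̃ Ỹ] = E[X̃ X̃ᵀ] β; in particular, if the q×q matrix E[X̃ X̃ᵀ] is invertible, then β = (E[X̃ X̃ᵀ])⁻¹ E[X̃ Ỹ]. -/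
/-!
Conditioning on `T` leaves `g(T)` unchanged and, by the tower property through `σ(X, T)`,
kills `ε`; hence `Ỹ = βᵀX̃ + ε` almost surely. Each `X̃ᵢ` is `σ(X, T)`-measurable, so pulling it
out of `E(· | X, T)` gives `E[X̃ᵢ ε] = 0`, and `E[X̃ Ỹ] = E[X̃ X̃ᵀ] β` follows by linearity.
-/

open MeasureTheory
open scoped RealInnerProductSpace

namespace MeasureTheory

variable {Ω : Type*} {m m₀ : MeasurableSpace Ω} {μ : Measure Ω}

lemma condExp_ae_eq_zero_of_le {E : Type*} [NormedAddCommGroup E] [NormedSpace ℝ E]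
    [CompleteSpace E] {m₂ : MeasurableSpace Ω} (hm : m ≤ m₂) (hm₂ : m₂ ≤ m₀)
    [SigmaFinite (μ.trim hm₂)] {ε : Ω → E} (hε : μ[ε|m₂] =ᵐ[μ] 0) : μ[ε|m] =ᵐ[μ] 0 :=
  calc μ[ε|m] =ᵐ[μ] μ[μ[ε|m₂]|m] := (condExp_condExp_of_le hm hm₂).symm
    _ =ᵐ[μ] μ[(0 : Ω → E)|m] := condExp_congr_ae hε
    _ = 0 := condExp_zero

lemma integral_mul_eq_zero_of_condExp_ae_eq_zero (hm : m ≤ m₀) [SigmaFinite (μ.trim hm)]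
    {f ε : Ω → ℝ} (hf : StronglyMeasurable[m] f) (hfε : Integrable (f * ε) μ)
    (hε : Integrable ε μ) (hcond : μ[ε|m] =ᵐ[μ] 0) : ∫ ω, f ω * ε ω ∂μ = 0 :=
  calc ∫ ω, f ω * ε ω ∂μ = ∫ ω, μ[f * ε|m] ω ∂μ := (integral_condExp hm).symm
    _ = ∫ ω, (0 : Ω → ℝ) ω ∂μ := integral_congr_ae <| by
        filter_upwards [condExp_mul_of_stronglyMeasurable_left hf hfε hε, hcond] with ω h h'
        simp [h, h']
    _ = 0 := integral_zero _ _

lemma condExp_sum_const_mul {ι : Type*} (s : Finset ι) (β : ι → ℝ) {X : ι → Ω → ℝ}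
    (hX : ∀ j ∈ s, Integrable (X j) μ) :
    μ[fun ω => ∑ j ∈ s, β j * X j ω|m] =ᵐ[μ] fun ω => ∑ j ∈ s, β j * μ[X j|m] ω := by
  have hsum : (fun ω => ∑ j ∈ s, β j * X j ω) = ∑ j ∈ s, β j • X j := by
    ext; simp [Finset.sum_apply]
  have hsmul : ∀ᵐ ω ∂μ, ∀ j ∈ s, μ[β j • X j|m] ω = β j * μ[X j|m] ω :=
    (Filter.eventually_all_finset s).2 fun j _ => by
      filter_upwards [condExp_smul (m := m) (μ := μ) (β j) (X j)] with ω h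
      simpa using h
  rw [hsum]
  filter_upwards [condExp_finsetSum (fun j hj => (hX j hj).smul (β j)) m, hsmul] with ω h h'
  rw [h, Finset.sum_apply]
  exact Finset.sum_congr rfl h'

lemma sub_condExp_ae_eq_of_eq_sum_add (hm : m ≤ m₀) [SigmaFinite (μ.trim hm)] {ι : Type*}
    [Fintype ι] (β : ι → ℝ) {X : ι → Ω → ℝ} {h ε : Ω → ℝ} (hX : ∀ j, Integrable (X j) μ)
    (hh : StronglyMeasurable[m] h) (hhi : Integrable h μ) (hε : Integrable ε μ)
    (hcond : μ[ε|m] =ᵐ[μ] 0) {Y : Ω → ℝ} (hY : Y = fun ω => ∑ j, β j * X j ω + h ω + ε ω) :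
    (fun ω => Y ω - μ[Y|m] ω) =ᵐ[μ] fun ω => ∑ j, β j * (X j ω - μ[X j|m] ω) + ε ω := by
  subst hY
  have hlin : Integrable (fun ω => ∑ j, β j * X j ω) μ :=
    integrable_finsetSum _ fun j _ => (hX j).const_mul (β j)
  filter_upwards [condExp_add (hlin.add hhi) hε m, condExp_add hlin hhi m,
    condExp_sum_const_mul Finset.univ β (m := m) fun j _ => hX j, hcond] with ω h₁ h₂ h₃ h₄
  simp only [Pi.add_apply] at h₁ h₂
  rw [show (fun ω => ∑ j, β j * X j ω + h ω + ε ω) = (fun ω => ∑ j, β j * X j ω) + h + ε from rfl,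
    h₁, h₂, h₃, h₄, condExp_of_stronglyMeasurable hm hh hhi]
  simp only [mul_sub, Finset.sum_sub_distrib, Pi.zero_apply]
  ring

lemma integral_mul_sum_add_eq_mulVec {ι : Type*} [Fintype ι] (β : ι → ℝ) {Z : ι → Ω → ℝ}
    {ε Y : Ω → ℝ} (hZ : ∀ i, MemLp (Z i) 2 μ) (hε : MemLp ε 2 μ)
    (hY : Y =ᵐ[μ] fun ω => ∑ j, β j * Z j ω + ε ω) (horth : ∀ i, ∫ ω, Z i ω * ε ω ∂μ = 0) :
    (fun i => ∫ ω, Z i ω * Y ω ∂μ) = (Matrix.of fun i j => ∫ ω, Z i ω * Z j ω ∂μ).mulVec β := by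
  funext i
  have hZZ : ∀ j, Integrable (fun ω => β j * (Z i ω * Z j ω)) μ :=
    fun j => ((hZ i).integrable_mul (hZ j)).const_mul (β j)
  have hZε : Integrable (fun ω => Z i ω * ε ω) μ := (hZ i).integrable_mul hε
  calc ∫ ω, Z i ω * Y ω ∂μ = ∫ ω, ∑ j, β j * (Z i ω * Z j ω) + Z i ω * ε ω ∂μ :=
        integral_congr_ae <| by
          filter_upwards [hY] with ω h
          simp only [h, mul_add, Finset.mul_sum, mul_left_comm (Z i ω)]
    _ = ∑ j, β j * ∫ ω, Z i ω * Z j ω ∂μ := by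
        rw [integral_add (integrable_finsetSum Finset.univ fun j _ => hZZ j) hZε,
          integral_finsetSum _ fun j _ => hZZ j, horth, add_zero]
        simp only [integral_const_mul]
    _ = _ := by simp [Matrix.mulVec, dotProduct, mul_comm]

end MeasureTheory

/-- Population moment identity for the partial linear model `Y = βᵀX + g(T) + ε`:
with `X̃ = X − E(X|T)` and `Ỹ = Y − E(Y|T)`, one has `E[X̃ Ỹ] = E[X̃ X̃ᵀ] β`;
in particular, if `E[X̃ X̃ᵀ]` is invertible then `β = (E[X̃ X̃ᵀ])⁻¹ E[X̃ Ỹ]`. -/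
theorem stmt15 {Ω : Type*} [MeasurableSpace Ω] (P : Measure Ω) [IsProbabilityMeasure P]
    (q : ℕ) (hq : 1 ≤ q)
    (X : Ω → EuclideanSpace ℝ (Fin q)) (hXmeas : Measurable X) (hX2 : MemLp X 2 P)
    (T : Ω → ℝ) (hT : Measurable T)
    (ε : Ω → ℝ) (hεmeas : Measurable ε) (hε2 : MemLp ε 2 P)
    (hεcond : P[ε | MeasurableSpace.comap (fun ω => (X ω, T ω)) inferInstance] =ᵐ[P] 0)
    (β : EuclideanSpace ℝ (Fin q))
    (g : ℝ → ℝ) (hg : Measurable g) (hg2 : MemLp (fun ω => g (T ω)) 2 P)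
    (Y : Ω → ℝ) (hY : Y = fun ω => ⟪β, X ω⟫ + g (T ω) + ε ω)
    (mT : MeasurableSpace Ω) (hmT : mT = MeasurableSpace.comap T inferInstance)
    (Xt : Fin q → Ω → ℝ)
    (hXt : ∀ i, Xt i = fun ω => X ω i - (P[(fun ω' => X ω' i) | mT]) ω)
    (Yt : Ω → ℝ) (hYt : Yt = fun ω => Y ω - (P[Y | mT]) ω)
    (M : Matrix (Fin q) (Fin q) ℝ)
    (hM : M = Matrix.of fun i j => ∫ ω, Xt i ω * Xt j ω ∂P)
    (v : Fin q → ℝ) (hv : v = fun i => ∫ ω, Xt i ω * Yt ω ∂P) :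
    v = M.mulVec (fun j => β j) ∧
      (IsUnit M → (fun j => β j) = M⁻¹.mulVec v) := by
  have hmXT := (hXmeas.prodMk hT).comap_le
  set mXT := MeasurableSpace.comap (fun ω => (X ω, T ω)) inferInstance
  have hpair : Measurable[mXT] fun ω => (X ω, T ω) := Measurable.of_comap_le le_rfl
  have hTmT : Measurable[mT] T := hmT ▸ comap_measurable T
  have hmT_le : mT ≤ mXT := hmT ▸ (measurable_snd.comp hpair).comap_le
  have hXi : ∀ i, MemLp (fun ω => X ω i) 2 P :=
    fun i => (EuclideanSpace.proj (𝕜 := ℝ) i).comp_memLp' hX2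
  have hXt2 : ∀ i, MemLp (Xt i) 2 P := fun i => hXt i ▸ (hXi i).sub ((hXi i).condExp one_le_two)
  have hY' : Y = fun ω => ∑ j, β j * X ω j + g (T ω) + ε ω := by
    simp [hY, PiLp.inner_apply, mul_comm]
  have hYt' : Yt =ᵐ[P] fun ω => ∑ j, β j * Xt j ω + ε ω := by
    simpa only [hYt, hXt] using sub_condExp_ae_eq_of_eq_sum_add (hmT_le.trans hmXT) (β ·)
      (fun j => (hXi j).integrable one_le_two) (hg.comp hTmT).stronglyMeasurable
      (hg2.integrable one_le_two) (hε2.integrable one_le_two)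
      (condExp_ae_eq_zero_of_le hmT_le hmXT hεcond) hY'
  have hXt_mXT : ∀ i, StronglyMeasurable[mXT] (Xt i) := fun i => by
    have hXi_mXT := (EuclideanSpace.proj (𝕜 := ℝ) i).measurable.comp (measurable_fst.comp hpair)
    exact hXt i ▸ hXi_mXT.stronglyMeasurable.sub (stronglyMeasurable_condExp.mono hmT_le)
  have hmoment : v = M.mulVec (β ·) := by
    rw [hv, hM]
    exact integral_mul_sum_add_eq_mulVec (β ·) hXt2 hε2 hYt' fun i =>
      integral_mul_eq_zero_of_condExp_ae_eq_zero hmXT (hXt_mXT i)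
        ((hXt2 i).integrable_mul hε2) (hε2.integrable one_le_two) hεcond
  exact ⟨hmoment, fun hM => by
    let := hM.invertible
    exact (Matrix.inv_mulVec_eq_vec hmoment).symm⟩
end
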